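/- Let (X,Y) be a random vector on [0,∞)² with joint Lebesgue density f satisfying P(Y = 0) = 0, and let T be independent of (X,Y) with Lebesgue density g on [0,∞). Set Δ = 1{X ≤ T} and Z = Δ·Y. Then the law of W = (T, Z) on [0,∞)² has density s_f with respect to μ; that is, for every Borel set B ⊆ [0,∞)², P((T,Z) ∈ B) = ∫_B s_f dμ. -/

import Mathlib

open MeasureTheory Set Real Filter

noncomputable section

/-- The set 𝓜 = [0,M₁]×[0,M₂]. -/
def Mset (M₁ M₂ : ℝ) : Set (ℝ × ℝ) := Icc 0 M₁ ×ˢ Icc 0 M₂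

/-- The dominating measure μ on ℝ²: two-dimensional Lebesgue measure plus one-dimensional
Lebesgue measure on the horizontal half-axis `[0,∞) × {0}`. -/
def domMeasure : Measure (ℝ × ℝ) :=
  volume + Measure.map (fun x : ℝ => (x, (0 : ℝ))) (volume.restrict (Ici 0))

/-- ∂₂F(t,z) = ∫₀ᵗ f(u,z) du. -/
def d2F (f : ℝ × ℝ → ℝ) (t z : ℝ) : ℝ := ∫ u in (0 : ℝ)..t, f (u, z)

/-- The marginal distribution function F_X(t) = ∫₀ᵗ ∫₀^∞ f(u,v) dv du. -/
def margX (f : ℝ × ℝ → ℝ) (t : ℝ) : ℝ := ∫ u in (0 : ℝ)..t, ∫ v in Ioi (0 : ℝ), f (u, v)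

/-- The observed-data density
`s_f(t,z) = g(t)·(1{z>0}·∂₂F(t,z) + 1{z=0}·(1 − F_X(t)))`. -/
def sDens (f : ℝ × ℝ → ℝ) (g : ℝ → ℝ) (w : ℝ × ℝ) : ℝ :=
  g w.1 * (if 0 < w.2 then d2F f w.1 w.2 else if w.2 = 0 then 1 - margX f w.1 else 0)

/-! Given `T = t`, independence lets us integrate over the law `ν` of `(X, Y)`: the observation
`(t, Δ Y)` lies in `B` iff either `X ≤ t` and `(t, Y) ∈ B`, or `X > t` and `(t, 0) ∈ B`. The first
event has `ν`-measure `∫_{B_t} ∂₂F(t, z) dz` (the line `z = 0` is Lebesgue-null, so only `z > 0`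
contributes), the second has measure `1 − F_X(t)` and is the atom of `Z` at `0`, which the
one-dimensional part of `μ` records. -/

open scoped ENNReal

theorem measure_mem_eq_lintegral_of_indepFun {Ω α β : Type*} [MeasurableSpace Ω]
    [MeasurableSpace α] [MeasurableSpace β] {P : Measure Ω} [IsFiniteMeasure P]
    {V : Ω → α} {T : Ω → β} (hV : Measurable V) (hT : Measurable T)
    (hVT : ProbabilityTheory.IndepFun V T P) {S : Set (α × β)} (hS : MeasurableSet S) :
    P {ω | (V ω, T ω) ∈ S} = ∫⁻ t, P.map V {v | (v, t) ∈ S} ∂P.map T := by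
  change P ((fun ω => (V ω, T ω)) ⁻¹' S) = _
  rw [← Measure.map_apply (hV.prodMk hT) hS,
    (ProbabilityTheory.indepFun_iff_map_prod_eq_prod_map_map hV.aemeasurable
      hT.aemeasurable).1 hVT, Measure.prod_apply_symm hS]
  rfl

theorem integrable_of_isFiniteMeasure_withDensity_ofReal {α : Type*} [MeasurableSpace α]
    {μ : Measure α} {f : α → ℝ} (hf : Measurable f) (hf0 : ∀ x, 0 ≤ f x)
    [IsFiniteMeasure (μ.withDensity fun x => ENNReal.ofReal (f x))] : Integrable f μ := by
  refine (lintegral_ofReal_ne_top_iff_integrable hf.aestronglyMeasurable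
    (ae_of_all _ hf0)).1 ?_
  rw [← setLIntegral_univ, ← withDensity_apply _ MeasurableSet.univ]
  exact measure_ne_top _ _

section HalfLine

variable {φ : ℝ → ℝ}

theorem integral_Ioi_zero_eq_integral (hφ : ∀ x < 0, φ x = 0) :
    ∫ x in Ioi 0, φ x = ∫ x, φ x := by
  rw [setIntegral_congr_set Ioi_ae_eq_Ici]
  exact setIntegral_eq_integral_of_forall_compl_eq_zero fun x hx => hφ x (not_le.1 hx)

theorem ofReal_intervalIntegral_eq_lintegral_Iic (hint : Integrable φ) (hφ0 : ∀ x, 0 ≤ φ x)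
    (hφ : ∀ x < 0, φ x = 0) (t : ℝ) :
    ENNReal.ofReal (∫ x in 0..t, φ x) = ∫⁻ x in Iic t, ENNReal.ofReal (φ x) := by
  rcases le_or_gt 0 t with ht | ht
  · have hsupp : (fun x => ENNReal.ofReal (φ x)).support ⊆ Ici 0 := fun x hx =>
      mem_Ici.2 <| not_lt.1 fun hneg => hx (by simp [hφ x hneg])
    rw [intervalIntegral.integral_of_le ht,
      ofReal_integral_eq_lintegral_ofReal hint.integrableOn (ae_of_all _ hφ0),
      ← setLIntegral_eq_of_support_subset hsupp (μ := volume.restrict (Iic t)),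
      Measure.restrict_restrict measurableSet_Ici, Ici_inter_Iic, setLIntegral_congr Ioc_ae_eq_Icc]
  · have hneg : ∫ x in 0..t, φ x ≤ 0 := by
      rw [intervalIntegral.integral_symm, neg_nonpos]
      exact intervalIntegral.integral_nonneg ht.le fun x _ => hφ0 x
    rw [ENNReal.ofReal_of_nonpos hneg, setLIntegral_eq_zero measurableSet_Iic fun x hx => by
      simp [hφ x (lt_of_le_of_lt hx ht)]]

end HalfLine

theorem measurable_setIntegral_Ioc {α : Type*} [MeasurableSpace α] {F : α → ℝ → ℝ}
    (hF : Measurable (Function.uncurry F)) {a b : α → ℝ} (ha : Measurable a)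
    (hb : Measurable b) : Measurable fun w => ∫ u in Ioc (a w) (b w), F w u := by
  have hind : Measurable fun q : α × ℝ => (Ioc (a q.1) (b q.1)).indicator (F q.1) q.2 := by
    simp only [indicator_apply]
    exact Measurable.ite ((measurableSet_lt (ha.comp measurable_fst) measurable_snd).inter
      (measurableSet_le measurable_snd (hb.comp measurable_fst))) hF measurable_const
  simpa only [integral_indicator measurableSet_Ioc]
    using hind.stronglyMeasurable.integral_prod_right'.measurable

theorem measurable_intervalIntegral_of_uncurry {α : Type*} [MeasurableSpace α]
    {F : α → ℝ → ℝ} (hF : Measurable (Function.uncurry F)) {a b : α → ℝ} (ha : Measurable a)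
    (hb : Measurable b) : Measurable fun w => ∫ u in a w..b w, F w u :=
  (measurable_setIntegral_Ioc hF ha hb).sub (measurable_setIntegral_Ioc hF hb ha)

theorem measurable_d2F {f : ℝ × ℝ → ℝ} (hf : Measurable f) :
    Measurable (Function.uncurry (d2F f)) :=
  measurable_intervalIntegral_of_uncurry (F := fun w u => f (u, w.2))
    (hf.comp (measurable_snd.prodMk measurable_fst.snd)) measurable_const measurable_fst

theorem measurable_margX {f : ℝ × ℝ → ℝ} (hf : Measurable f) : Measurable (margX f) :=
  measurable_intervalIntegral_of_uncurry (F := fun _ u => ∫ v in Ioi 0, f (u, v))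
    ((hf.stronglyMeasurable.integral_prod_right' (ν := volume.restrict (Ioi 0))).measurable.comp
      measurable_snd) measurable_const measurable_id

theorem measurable_sDens {f : ℝ × ℝ → ℝ} {g : ℝ → ℝ} (hf : Measurable f) (hg : Measurable g) :
    Measurable (sDens f g) :=
  (hg.comp measurable_fst).mul <| Measurable.ite
    (measurableSet_lt measurable_const measurable_snd) (measurable_d2F hf) <| Measurable.ite
      (measurableSet_eq_fun measurable_snd measurable_const)
      (measurable_const.sub ((measurable_margX hf).comp measurable_fst)) measurable_const

theorem sDens_of_ne_zero {f : ℝ × ℝ → ℝ} (g : ℝ → ℝ) (hfz : ∀ x z, z < 0 → f (x, z) = 0)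
    {t z : ℝ} (hz : z ≠ 0) : sDens f g (t, z) = g t * d2F f t z := by
  rcases hz.lt_or_gt with hneg | hpos
  · have : d2F f t z = 0 := by simp [d2F, hfz _ _ hneg]
    simp [sDens, hneg.not_gt, hneg.ne, this]
  · simp [sDens, hpos]

theorem lintegral_domMeasure {φ : ℝ × ℝ → ℝ≥0∞} (hφ : Measurable φ) :
    ∫⁻ w, φ w ∂domMeasure =
      ∫⁻ t, ((∫⁻ z, φ (t, z)) + (Ici 0).indicator (fun x => φ (x, 0)) t) := by
  rw [domMeasure, lintegral_add_measure, lintegral_map hφ measurable_prodMk_right,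
    Measure.volume_eq_prod, lintegral_prod _ hφ.aemeasurable,
    ← lintegral_indicator measurableSet_Ici, lintegral_add_left hφ.lintegral_prod_right']

def observation (p : ℝ × ℝ) (t : ℝ) : ℝ × ℝ := (t, if p.1 ≤ t then p.2 else 0)

theorem measurable_observation : Measurable (Function.uncurry observation) :=
  measurable_snd.prodMk <| Measurable.ite (measurableSet_le measurable_fst.fst measurable_snd)
    measurable_fst.snd measurable_const

open Classical in
theorem measure_observation_mem (ν : Measure (ℝ × ℝ)) (B : Set (ℝ × ℝ)) (t : ℝ) :
    ν {p | observation p t ∈ B} =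
      ν (Iic t ×ˢ {z | (t, z) ∈ B}) + if (t, 0) ∈ B then ν {p | t < p.1} else 0 := by
  by_cases h0 : (t, 0) ∈ B
  · have hsplit : {p | observation p t ∈ B} = Iic t ×ˢ {z | (t, z) ∈ B} ∪ {p | t < p.1} := by
      ext ⟨x, y⟩
      rcases le_or_gt x t with hx | hx
      · simp [observation, hx, not_lt.2 hx]
      · simp [observation, hx, not_le.2 hx, h0]
    have hdisj : Disjoint (Iic t ×ˢ {z | (t, z) ∈ B}) {p : ℝ × ℝ | t < p.1} :=
      disjoint_left.2 fun p hp (hp' : t < p.1) => not_lt.2 hp.1 hp'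
    rw [if_pos h0, hsplit, measure_union hdisj (measurableSet_lt measurable_const measurable_fst)]
  · have hsplit : {p | observation p t ∈ B} = Iic t ×ˢ {z | (t, z) ∈ B} := by
      ext ⟨x, y⟩
      by_cases hx : x ≤ t <;> simp [observation, hx, h0]
    rw [if_neg h0, hsplit, add_zero]

section Density

variable {f : ℝ × ℝ → ℝ}

theorem withDensity_Iic_prod_eq_lintegral_d2F (hf : Measurable f) (hint : Integrable f)
    (hf0 : ∀ p, 0 ≤ f p) (hfx : ∀ x z, x < 0 → f (x, z) = 0) (t : ℝ) {S : Set ℝ}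
    (hS : MeasurableSet S) :
    volume.withDensity (fun p => ENNReal.ofReal (f p)) (Iic t ×ˢ S) =
      ∫⁻ z in S, ENNReal.ofReal (d2F f t z) := by
  rw [withDensity_apply _ (measurableSet_Iic.prod hS), Measure.volume_eq_prod,
    ← Measure.prod_restrict, lintegral_prod_symm _ hf.ennreal_ofReal.aemeasurable]
  refine lintegral_congr_ae (ae_restrict_of_ae ?_)
  filter_upwards [hint.prod_left_ae] with z hz
  exact (ofReal_intervalIntegral_eq_lintegral_Iic hz (fun x => hf0 _) (hfx · z) t).symm

theorem withDensity_fst_le_eq_ofReal_margX (hf : Measurable f) (hint : Integrable f)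
    (hf0 : ∀ p, 0 ≤ f p) (hfx : ∀ x z, x < 0 → f (x, z) = 0)
    (hfz : ∀ x z, z < 0 → f (x, z) = 0) (t : ℝ) :
    volume.withDensity (fun p => ENNReal.ofReal (f p)) {p | p.1 ≤ t} =
      ENNReal.ofReal (margX f t) := by
  have hmarg : margX f t = ∫ u in 0..t, ∫ v, f (u, v) :=
    intervalIntegral.integral_congr fun u _ => integral_Ioi_zero_eq_integral (hfz u)
  rw [show {p : ℝ × ℝ | p.1 ≤ t} = Iic t ×ˢ univ by ext; simp,
    withDensity_apply _ (measurableSet_Iic.prod .univ), Measure.volume_eq_prod,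
    ← Measure.prod_restrict, Measure.restrict_univ,
    lintegral_prod _ hf.ennreal_ofReal.aemeasurable, hmarg,
    ofReal_intervalIntegral_eq_lintegral_Iic hint.integral_prod_left
      (fun u => integral_nonneg fun v => hf0 _) (fun u hu => by simp [hfx u _ hu]) t]
  refine lintegral_congr_ae (ae_restrict_of_ae ?_)
  filter_upwards [hint.prod_right_ae] with u hu
  exact (ofReal_integral_eq_lintegral_ofReal hu (ae_of_all _ fun v => hf0 _)).symm

theorem withDensity_fst_gt_eq_ofReal_one_sub_margX (hf : Measurable f) (hf0 : ∀ p, 0 ≤ f p)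
    (hfx : ∀ x z, x < 0 → f (x, z) = 0) (hfz : ∀ x z, z < 0 → f (x, z) = 0)
    [IsProbabilityMeasure (volume.withDensity fun p => ENNReal.ofReal (f p))] {t : ℝ}
    (ht : 0 ≤ t) :
    volume.withDensity (fun p => ENNReal.ofReal (f p)) {p | t < p.1} =
      ENNReal.ofReal (1 - margX f t) := by
  have hmarg : 0 ≤ margX f t :=
    intervalIntegral.integral_nonneg ht fun u _ => integral_nonneg fun v => hf0 _
  rw [show {p : ℝ × ℝ | t < p.1} = {p | p.1 ≤ t}ᶜ by ext; simp,
    measure_compl (measurableSet_le measurable_fst measurable_const) (measure_ne_top _ _),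
    withDensity_fst_le_eq_ofReal_margX hf
      (integrable_of_isFiniteMeasure_withDensity_ofReal hf hf0) hf0 hfx hfz,
    measure_univ, ENNReal.ofReal_sub _ hmarg, ENNReal.ofReal_one]

theorem setLIntegral_sDens_eq_mul_d2F (g : ℝ → ℝ) (hfz : ∀ x z, z < 0 → f (x, z) = 0) {t : ℝ}
    (hgt : 0 ≤ g t) (S : Set ℝ) :
    ∫⁻ z in S, ENNReal.ofReal (sDens f g (t, z)) =
      ENNReal.ofReal (g t) * ∫⁻ z in S, ENNReal.ofReal (d2F f t z) := by
  rw [← lintegral_const_mul' _ _ ENNReal.ofReal_ne_top]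
  refine lintegral_congr_ae (ae_restrict_of_ae ?_)
  filter_upwards [compl_mem_ae_iff.2 (measure_singleton (0 : ℝ))] with z hz
  rw [sDens_of_ne_zero g hfz hz, ENNReal.ofReal_mul hgt]

open Classical in
theorem ofReal_mul_measure_observation_mem {g : ℝ → ℝ} (hf : Measurable f)
    (hf0 : ∀ p, 0 ≤ f p) (hfsupp : ∀ p : ℝ × ℝ, p ∉ Ici (0 : ℝ) ×ˢ Ici (0 : ℝ) → f p = 0)
    [IsProbabilityMeasure (volume.withDensity fun p => ENNReal.ofReal (f p))]
    (hg0 : ∀ t, 0 ≤ g t) (hgneg : ∀ t < 0, g t = 0) {B : Set (ℝ × ℝ)} (hB : MeasurableSet B)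
    (t : ℝ) :
    ENNReal.ofReal (g t) *
        volume.withDensity (fun p => ENNReal.ofReal (f p)) {p | observation p t ∈ B} =
      (∫⁻ z, B.indicator (fun w => ENNReal.ofReal (sDens f g w)) (t, z)) +
        (Ici 0).indicator (fun x => B.indicator (fun w => ENNReal.ofReal (sDens f g w)) (x, 0))
          t := by
  have hfx : ∀ x z, x < 0 → f (x, z) = 0 := fun x z hx => hfsupp _ fun h => hx.not_ge h.1
  have hfz : ∀ x z, z < 0 → f (x, z) = 0 := fun x z hz => hfsupp _ fun h => hz.not_ge h.2
  have hBt : MeasurableSet {z | (t, z) ∈ B} := measurable_prodMk_left hB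
  rw [measure_observation_mem, mul_add]
  congr 1
  · rw [withDensity_Iic_prod_eq_lintegral_d2F hf
      (integrable_of_isFiniteMeasure_withDensity_ofReal hf hf0) hf0 hfx t hBt,
      ← setLIntegral_sDens_eq_mul_d2F g hfz (hg0 t)]
    exact (lintegral_indicator hBt _).symm
  · rcases le_or_gt 0 t with ht | ht
    · rw [indicator_of_mem (mem_Ici.2 ht)]
      split_ifs with h0
      · simp [indicator_of_mem h0, sDens, ENNReal.ofReal_mul (hg0 t),
          withDensity_fst_gt_eq_ofReal_one_sub_margX hf hf0 hfx hfz ht]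
      · simp [indicator_of_notMem h0]
    · rw [hgneg t ht, indicator_of_notMem (notMem_Ici.2 ht), ENNReal.ofReal_zero, zero_mul]

end Density

theorem stmt16_general {Ω : Type*} [MeasurableSpace Ω] (P : Measure Ω) [IsProbabilityMeasure P]
    (X Y T : Ω → ℝ) (hX : Measurable X) (hY : Measurable Y) (hT : Measurable T)
    (f : ℝ × ℝ → ℝ) (g : ℝ → ℝ)
    (hfmeas : Measurable f) (hfnonneg : ∀ p, 0 ≤ f p)
    (hfsupp : ∀ p : ℝ × ℝ, p ∉ Ici (0 : ℝ) ×ˢ Ici (0 : ℝ) → f p = 0)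
    (hgmeas : Measurable g) (hgnonneg : ∀ t, 0 ≤ g t) (hgsupp : ∀ t, t < 0 → g t = 0)
    (hlawXY : Measure.map (fun ω => (X ω, Y ω)) P =
      volume.withDensity fun p => ENNReal.ofReal (f p))
    (hlawT : Measure.map T P = volume.withDensity fun t => ENNReal.ofReal (g t))
    (hindep : ProbabilityTheory.IndepFun (fun ω => (X ω, Y ω)) T P) :
    ∀ B : Set (ℝ × ℝ), MeasurableSet B →
      P {ω | (T ω, if X ω ≤ T ω then Y ω else 0) ∈ B} =
        ∫⁻ w in B, ENNReal.ofReal (sDens f g w) ∂domMeasure := by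
  intro B hB
  have : IsProbabilityMeasure (volume.withDensity fun p : ℝ × ℝ => ENNReal.ofReal (f p)) :=
    hlawXY ▸ Measure.isProbabilityMeasure_map (hX.prodMk hY).aemeasurable
  have hobs : MeasurableSet {q : (ℝ × ℝ) × ℝ | observation q.1 q.2 ∈ B} :=
    measurable_observation hB
  calc P {ω | (T ω, if X ω ≤ T ω then Y ω else 0) ∈ B}
      = ∫⁻ t, ENNReal.ofReal (g t) *
          volume.withDensity (fun p => ENNReal.ofReal (f p)) {p | observation p t ∈ B} := by
        change P {ω | ((X ω, Y ω), T ω) ∈ {q : (ℝ × ℝ) × ℝ | observation q.1 q.2 ∈ B}} = _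
        rw [measure_mem_eq_lintegral_of_indepFun (hX.prodMk hY) hT hindep hobs, hlawXY, hlawT]
        exact lintegral_withDensity_eq_lintegral_mul _ hgmeas.ennreal_ofReal
          (measurable_measure_prodMk_right hobs)
    _ = ∫⁻ w, B.indicator (fun w => ENNReal.ofReal (sDens f g w)) w ∂domMeasure := by
        rw [lintegral_domMeasure ((measurable_sDens hfmeas hgmeas).ennreal_ofReal.indicator hB)]
        exact lintegral_congr <| ofReal_mul_measure_observation_mem hfmeas hfnonneg hfsupp
          hgnonneg hgsupp hB
    _ = ∫⁻ w in B, ENNReal.ofReal (sDens f g w) ∂domMeasure := lintegral_indicator hB _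

/-- if `(X,Y)` has joint Lebesgue density `f` with `P(Y=0) = 0`, and `T`
is independent of `(X,Y)` with Lebesgue density `g`, then with `Δ = 1{X ≤ T}` and
`Z = Δ·Y`, the law of `W = (T,Z)` has density `s_f` with respect to `μ`:
`P((T,Z) ∈ B) = ∫_B s_f dμ` for every Borel set `B`. -/
theorem stmt16 {Ω : Type*} [MeasurableSpace Ω] (P : Measure Ω) [IsProbabilityMeasure P]
    (X Y T : Ω → ℝ) (hX : Measurable X) (hY : Measurable Y) (hT : Measurable T)
    (f : ℝ × ℝ → ℝ) (g : ℝ → ℝ)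
    (hfmeas : Measurable f) (hfnonneg : ∀ p, 0 ≤ f p)
    (hfsupp : ∀ p : ℝ × ℝ, p ∉ Ici (0 : ℝ) ×ˢ Ici (0 : ℝ) → f p = 0)
    (hgmeas : Measurable g) (hgnonneg : ∀ t, 0 ≤ g t) (hgsupp : ∀ t, t < 0 → g t = 0)
    (hlawXY : Measure.map (fun ω => (X ω, Y ω)) P =
      volume.withDensity fun p => ENNReal.ofReal (f p))
    (hY0 : P {ω | Y ω = 0} = 0)
    (hlawT : Measure.map T P = volume.withDensity fun t => ENNReal.ofReal (g t))
    (hindep : ProbabilityTheory.IndepFun (fun ω => (X ω, Y ω)) T P) :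
    ∀ B : Set (ℝ × ℝ), MeasurableSet B →
      P {ω | (T ω, if X ω ≤ T ω then Y ω else 0) ∈ B} =
        ∫⁻ w in B, ENNReal.ofReal (sDens f g w) ∂domMeasure :=
  stmt16_general P X Y T hX hY hT f g hfmeas hfnonneg hfsupp hgmeas hgnonneg hgsupp hlawXY hlawT
    hindep

end
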